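/- arXiv:1404.4015 — 3 statements merged into one kernel-verified Lean document; each statement's English description precedes it below -/
import Mathlib

section
/- For every real θ, the family indexed by all Young diagrams ν with terms e^{−θ²}·(dim(ν)·θ^{|ν|}/|ν|!)² has sum 1 (HasSum); that is, the Poissonized Plancherel measure of parameter θ is a probability distribution on the set of Young diagrams. -/
/-- A function `f : ℕ × ℕ → ℕ` is a standard Young tableau of skew shape `ν / μ` if it
vanishes off the cells of `ν` not in `μ`, is a bijection from those cells onto
`{1, …, |ν| − |μ|}`, and is strictly increasing along each row and down each column. -/
def IsSkewSYT (μ ν : YoungDiagram) (f : ℕ × ℕ → ℕ) : Prop :=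
  (∀ c : ℕ × ℕ, c ∉ ν.cells \ μ.cells → f c = 0) ∧
  Set.BijOn f (↑(ν.cells \ μ.cells)) (Set.Icc 1 (ν.card - μ.card)) ∧
  (∀ i j1 j2 : ℕ, (i, j1) ∈ ν.cells \ μ.cells → (i, j2) ∈ ν.cells \ μ.cells →
    j1 < j2 → f (i, j1) < f (i, j2)) ∧
  (∀ i1 i2 j : ℕ, (i1, j) ∈ ν.cells \ μ.cells → (i2, j) ∈ ν.cells \ μ.cells →
    i1 < i2 → f (i1, j) < f (i2, j))

/-- `dimSkew μ ν` is the number of standard Young tableaux of skew shape `ν / μ`. -/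
noncomputable def dimSkew (μ ν : YoungDiagram) : ℕ :=
  Set.ncard {f : ℕ × ℕ → ℕ | IsSkewSYT μ ν f}


/-!
Young's lattice is a differential poset. A diagram `ρ` has exactly one more upper cover than lower
covers (its addable corners interlace with its removable ones), and two distinct diagrams of the
same size have as many common upper covers as common lower covers: there is one of each when
`μ ⊔ ν` covers both, none otherwise, because `|μ ⊔ ν| + |μ ⊓ ν| = |μ| + |ν|`. For the up and
down operators this is the relation `DU = UD + I`. Removing the cell that holds the largest entry
of a tableau gives the branching rule `dim ν = ∑_{μ ⋖ ν} dim μ`. Together with `DU = UD + I` this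
yields `∑_{ν ⋗ ρ} dim ν = (|ρ| + 1) dim ρ`, and then `∑_{|ν| = n} dim(ν)² = n!` by induction on
`n`. So the Poissonized Plancherel weights of the diagrams of size `n` add up to the Poisson(`θ²`)
probability of `n`.
-/

open Finset

theorem hasSum_of_hasSum_sum_fiberwise_of_nonneg {β γ : Type*} {f : β → ℝ} (hf : 0 ≤ f)
    {g : β → γ} {s : γ → Finset β} (hs : ∀ c b, b ∈ s c ↔ g b = c) {a : ℝ}
    (h : HasSum (fun c => ∑ b ∈ s c, f b) a) : HasSum f a := by
  have hfiber : ∀ c, g ⁻¹' {c} = s c := fun c => Set.ext fun b => (hs c b).symm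
  have hsum_fiber : ∀ c, ∑' b : g ⁻¹' {c}, f b = ∑ b ∈ s c, f b := fun c => by
    rw [hfiber c, Finset.tsum_subtype']
  have hsum : Summable f := (summable_partition hf (s := fun c => g ⁻¹' {c}) (by simp)).2
    ⟨fun c => by rw [hfiber c]; exact (s c).summable f, by simpa only [hsum_fiber] using h.summable⟩
  have := hsum.hasSum.tsum_fiberwise g
  simp only [hsum_fiber] at this
  exact this.unique h ▸ hsum.hasSum

namespace YoungDiagram

open scoped Classical

variable {μ ν ρ : YoungDiagram} {c : ℕ × ℕ}

/-! ### Diagrams of a given size -/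

theorem card_bot : (⊥ : YoungDiagram).card = 0 := by
  simp [YoungDiagram.card, cells_bot]

theorem eq_bot_of_card_eq_zero (h : μ.card = 0) : μ = ⊥ :=
  YoungDiagram.ext (by rw [Finset.card_eq_zero.1 h, cells_bot])

theorem card_lt_card_of_lt (h : μ < ν) : μ.card < ν.card :=
  Finset.card_lt_card (cells_ssubset_iff.2 h)

theorem eq_of_le_of_card_le (h : μ ≤ ν) (hc : ν.card ≤ μ.card) : μ = ν :=
  YoungDiagram.ext (Finset.eq_of_subset_of_card_le (cells_subset_iff.2 h) hc)

theorem card_sup_add_card_inf (μ ν : YoungDiagram) :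
    (μ ⊔ ν).card + (μ ⊓ ν).card = μ.card + ν.card := by
  simp only [YoungDiagram.card, cells_sup, cells_inf, card_union_add_card_inter]

theorem cells_subset_range_product_range (ν : YoungDiagram) :
    ν.cells ⊆ range ν.card ×ˢ range ν.card := by
  rintro ⟨i, j⟩ h
  have hi := mem_iff_lt_colLen.1 h
  have hj := mem_iff_lt_rowLen.1 h
  rw [colLen_eq_card] at hi
  rw [rowLen_eq_card] at hj
  simp only [mem_product, mem_range]
  exact ⟨hi.trans_le (card_filter_le _ _), hj.trans_le (card_filter_le _ _)⟩

theorem finite_setOf_card_eq (n : ℕ) : {ν : YoungDiagram | ν.card = n}.Finite := by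
  refine Set.Finite.of_finite_image (f := cells) ?_ fun μ _ ν _ h => YoungDiagram.ext h
  refine (range n ×ˢ range n).powerset.finite_toSet.subset ?_
  rintro _ ⟨ν, rfl, rfl⟩
  exact mem_powerset.2 ν.cells_subset_range_product_range

noncomputable def level (n : ℕ) : Finset YoungDiagram := (finite_setOf_card_eq n).toFinset

@[simp]
theorem mem_level {n : ℕ} : ν ∈ level n ↔ ν.card = n :=
  Set.Finite.mem_toFinset _

theorem level_zero : level 0 = {⊥} := by
  ext ν
  simp only [mem_level, mem_singleton]
  exact ⟨eq_bot_of_card_eq_zero, fun h => h ▸ card_bot⟩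

/-! ### Covers in Young's lattice -/

def insertCell (μ : YoungDiagram) (c : ℕ × ℕ) (hc : ∀ x < c, x ∈ μ) : YoungDiagram where
  cells := insert c μ.cells
  isLowerSet := by
    intro x y hyx hx
    simp only [coe_insert, Set.mem_insert_iff, mem_coe, mem_cells] at hx ⊢
    rcases hx with rfl | hx
    · exact hyx.lt_or_eq.symm.imp id (hc y)
    · exact .inr (μ.isLowerSet hyx hx)

def eraseCell (ν : YoungDiagram) (c : ℕ × ℕ) (hc : ∀ x ∈ ν, c ≤ x → x = c) : YoungDiagram where
  cells := ν.cells.erase c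
  isLowerSet := by
    rw [coe_erase]
    exact ν.isLowerSet.erase hc

section CellsEqInsert

variable (h : ν.cells = insert c μ.cells)
include h

theorem mem_of_cells_eq_insert : c ∈ ν := by
  rw [← mem_cells, h]
  exact mem_insert_self c μ.cells

theorem forall_lt_mem_of_cells_eq_insert : ∀ x < c, x ∈ μ := by
  intro x hx
  have hxν : x ∈ ν.cells := ν.isLowerSet hx.le (mem_of_cells_eq_insert h)
  rw [h] at hxν
  exact (mem_insert.1 hxν).resolve_left hx.ne

theorem eq_of_le_of_cells_eq_insert (hc : c ∉ μ) : ∀ x ∈ ν, c ≤ x → x = c := by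
  intro x hx hcx
  rw [← mem_cells, h] at hx
  exact (mem_insert.1 hx).resolve_right fun hxμ => hc (μ.isLowerSet hcx hxμ)

theorem card_eq_of_cells_eq_insert (hc : c ∉ μ) : ν.card = μ.card + 1 := by
  rw [YoungDiagram.card, h, card_insert_of_notMem hc]

theorem coe_eq_insert_of_cells_eq_insert : (ν : Set (ℕ × ℕ)) = insert c (μ : Set (ℕ × ℕ)) := by
  change (ν.cells : Set (ℕ × ℕ)) = insert c (μ.cells : Set (ℕ × ℕ))
  rw [h, coe_insert]

theorem eq_insertCell_of_cells_eq_insert :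
    ν = μ.insertCell c (forall_lt_mem_of_cells_eq_insert h) :=
  YoungDiagram.ext h

theorem eq_eraseCell_of_cells_eq_insert (hc : c ∉ μ) :
    μ = ν.eraseCell c (eq_of_le_of_cells_eq_insert h hc) :=
  YoungDiagram.ext (by simp only [eraseCell, h, erase_insert hc])

end CellsEqInsert

theorem covBy_of_le_of_card_eq (h : μ ≤ ν) (hc : ν.card = μ.card + 1) : μ ⋖ ν :=
  ⟨h.lt_of_ne (by rintro rfl; omega), fun ρ h₁ h₂ => by
    have := card_lt_card_of_lt h₁
    have := card_lt_card_of_lt h₂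
    omega⟩

theorem covBy_iff_exists_cells_eq_insert : μ ⋖ ν ↔ ∃ c ∉ μ, ν.cells = insert c μ.cells := by
  refine ⟨fun h => ?_, fun ⟨c, hc, h⟩ => covBy_of_le_of_card_eq
    (cells_subset_iff.1 (h ▸ subset_insert c μ.cells)) (card_eq_of_cells_eq_insert h hc)⟩
  obtain ⟨c, ⟨hcν, hcμ⟩, hmin⟩ := exists_minimal_of_wellFoundedLT (fun c => c ∈ ν ∧ c ∉ μ)
    (Set.exists_of_ssubset (coe_ssubset.2 (cells_ssubset_iff.2 h.lt)))
  have hc : ∀ x < c, x ∈ μ := fun x hx => by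
    by_contra hxμ
    exact hx.not_ge (hmin ⟨ν.isLowerSet hx.le hcν, hxμ⟩ hx.le)
  have hle : μ.insertCell c hc ≤ ν := by
    rw [← cells_subset_iff]
    exact insert_subset hcν (cells_subset_iff.2 h.le)
  refine ⟨c, hcμ, ?_⟩
  rcases h.eq_or_eq (cells_subset_iff.1 (subset_insert c μ.cells)) hle with h' | h'
  · exact absurd (h' ▸ mem_insert_self c μ.cells : c ∈ μ.cells) hcμ
  · exact (congrArg cells h').symm

theorem card_eq_of_covBy (h : μ ⋖ ν) : ν.card = μ.card + 1 := by
  obtain ⟨c, hc, hν⟩ := covBy_iff_exists_cells_eq_insert.1 h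
  exact card_eq_of_cells_eq_insert hν hc

theorem covBy_iff_le_and_card_eq : μ ⋖ ν ↔ μ ≤ ν ∧ ν.card = μ.card + 1 :=
  ⟨fun h => ⟨h.le, card_eq_of_covBy h⟩, fun h => covBy_of_le_of_card_eq h.1 h.2⟩

theorem covBy_insertCell (hc : c ∉ μ) (h : ∀ x < c, x ∈ μ) : μ ⋖ μ.insertCell c h :=
  covBy_iff_exists_cells_eq_insert.2 ⟨c, hc, rfl⟩

theorem eraseCell_covBy (hc : c ∈ ν) (h : ∀ x ∈ ν, c ≤ x → x = c) : ν.eraseCell c h ⋖ ν :=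
  covBy_iff_exists_cells_eq_insert.2 ⟨c, fun hc' => (mem_erase.1 hc').1 rfl,
    (insert_erase hc).symm⟩

noncomputable def upperCovers (μ : YoungDiagram) : Finset YoungDiagram :=
  (level (μ.card + 1)).filter (μ ⋖ ·)

noncomputable def lowerCovers (ν : YoungDiagram) : Finset YoungDiagram :=
  (level (ν.card - 1)).filter (· ⋖ ν)

@[simp]
theorem mem_upperCovers : ν ∈ μ.upperCovers ↔ μ ⋖ ν := by
  simp only [upperCovers, mem_filter, mem_level, and_iff_right_iff_imp]
  exact card_eq_of_covBy

@[simp]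
theorem mem_lowerCovers : μ ∈ ν.lowerCovers ↔ μ ⋖ ν := by
  simp only [lowerCovers, mem_filter, mem_level, and_iff_right_iff_imp]
  intro h
  have := card_eq_of_covBy h
  omega

/-! ### Counting covers -/

def addableRows (μ : YoungDiagram) : Finset ℕ :=
  (range (μ.colLen 0 + 1)).filter fun i => i = 0 ∨ μ.rowLen i < μ.rowLen (i - 1)

def removableRows (ν : YoungDiagram) : Finset ℕ :=
  (range (ν.colLen 0)).filter fun i => ν.rowLen (i + 1) < ν.rowLen i

theorem mem_addableRows {i : ℕ} : i ∈ μ.addableRows ↔ i = 0 ∨ μ.rowLen i < μ.rowLen (i - 1) := by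
  simp only [addableRows, mem_filter, mem_range, and_iff_right_iff_imp, Nat.lt_succ_iff]
  rintro (rfl | h)
  · exact Nat.zero_le _
  · have := mem_iff_lt_colLen.1 (mem_iff_lt_rowLen.2 (Nat.zero_lt_of_lt h))
    omega

theorem mem_removableRows {i : ℕ} : i ∈ ν.removableRows ↔ ν.rowLen (i + 1) < ν.rowLen i := by
  simp only [removableRows, mem_filter, mem_range, and_iff_right_iff_imp]
  exact fun h => mem_iff_lt_colLen.1 (mem_iff_lt_rowLen.2 (Nat.zero_lt_of_lt h))

theorem card_addableRows (μ : YoungDiagram) : #μ.addableRows = #μ.removableRows + 1 := by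
  have : μ.addableRows = insert 0 (μ.removableRows.map (addLeftEmbedding 1)) := by
    ext i
    rcases i with _ | i
    · simp [mem_addableRows]
    · simp [mem_addableRows, mem_removableRows, add_comm 1]
  rw [this, card_insert_of_notMem (by simp), card_map]

theorem rowLen_notMem (μ : YoungDiagram) (i : ℕ) : (i, μ.rowLen i) ∉ μ := by
  simp [mem_iff_lt_rowLen]

theorem forall_lt_mem_of_mem_addableRows {i : ℕ} (hi : i ∈ μ.addableRows) :
    ∀ x < (i, μ.rowLen i), x ∈ μ := by
  rintro ⟨a, b⟩ hlt
  obtain ⟨ha, hb⟩ := Prod.mk_le_mk.1 hlt.le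
  rw [mem_iff_lt_rowLen]
  rcases hb.lt_or_eq with hb | rfl
  · exact hb.trans_le (μ.rowLen_anti a i ha)
  · have ha : a < i := ha.lt_of_ne fun h => hlt.ne (by rw [h])
    rcases mem_addableRows.1 hi with rfl | hi
    · omega
    · exact hi.trans_le (μ.rowLen_anti a (i - 1) (by omega))

theorem eq_of_le_of_mem_removableRows {i : ℕ} (hi : i ∈ ν.removableRows) :
    ∀ x ∈ ν, (i, ν.rowLen i - 1) ≤ x → x = (i, ν.rowLen i - 1) := by
  rintro ⟨a, b⟩ hx hle
  obtain ⟨ha, hb⟩ := Prod.mk_le_mk.1 hle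
  have hb' := mem_iff_lt_rowLen.1 hx
  have := mem_removableRows.1 hi
  rcases ha.lt_or_eq with ha | rfl
  · have := ν.rowLen_anti (i + 1) a ha
    omega
  · simp only [Prod.mk.injEq, true_and]
    omega

theorem exists_mem_addableRows (hc : c ∉ μ) (h : ∀ x < c, x ∈ μ) :
    ∃ i ∈ μ.addableRows, c = (i, μ.rowLen i) := by
  obtain ⟨i, j⟩ := c
  have hj : j = μ.rowLen i := by
    rw [mem_iff_lt_rowLen, not_lt] at hc
    rcases j with _ | j
    · omega
    · have := mem_iff_lt_rowLen.1 (h (i, j) (Prod.mk_lt_mk_iff_right.2 j.lt_succ_self))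
      omega
  subst hj
  refine ⟨i, mem_addableRows.2 ?_, rfl⟩
  rcases i with _ | i
  · exact .inl rfl
  · exact .inr (mem_iff_lt_rowLen.1 (h (i, _) (Prod.mk_lt_mk_iff_left.2 i.lt_succ_self)))

theorem exists_mem_removableRows (hc : c ∈ ν) (h : ∀ x ∈ ν, c ≤ x → x = c) :
    ∃ i ∈ ν.removableRows, c = (i, ν.rowLen i - 1) := by
  obtain ⟨i, j⟩ := c
  have hj := mem_iff_lt_rowLen.1 hc
  have hnext : ∀ x, (i, j) < x → x ∉ ν := fun x hx hxν => hx.ne (h x hxν hx.le).symm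
  have hrow : ν.rowLen i = j + 1 := by
    have := mt mem_iff_lt_rowLen.2 (hnext (i, j + 1) (Prod.mk_lt_mk_iff_right.2 j.lt_succ_self))
    omega
  refine ⟨i, mem_removableRows.2 ?_, by rw [hrow]; rfl⟩
  have := mt mem_iff_lt_rowLen.2 (hnext (i + 1, j) (Prod.mk_lt_mk_iff_left.2 i.lt_succ_self))
  omega

theorem card_upperCovers_eq_card_addableRows (μ : YoungDiagram) :
    #μ.upperCovers = #μ.addableRows := by
  refine (card_bij (fun i hi => μ.insertCell _ (forall_lt_mem_of_mem_addableRows hi))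
    (fun i _ => mem_upperCovers.2 (covBy_insertCell (μ.rowLen_notMem i) _)) ?_ ?_).symm
  · intro i₁ _ i₂ _ he
    have h : (i₁, μ.rowLen i₁) ∈ insert (i₂, μ.rowLen i₂) μ.cells := by
      convert mem_insert_self (i₁, μ.rowLen i₁) μ.cells using 1
      exact congrArg cells he.symm
    exact (Prod.mk.inj ((mem_insert.1 h).resolve_right (μ.rowLen_notMem i₁))).1
  · intro ν hν
    obtain ⟨c, hc, h⟩ := covBy_iff_exists_cells_eq_insert.1 (mem_upperCovers.1 hν)
    obtain ⟨i, hi, rfl⟩ := exists_mem_addableRows hc (forall_lt_mem_of_cells_eq_insert h)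
    exact ⟨i, hi, (eq_insertCell_of_cells_eq_insert h).symm⟩

theorem card_lowerCovers_eq_card_removableRows (ν : YoungDiagram) :
    #ν.lowerCovers = #ν.removableRows := by
  refine (card_bij (fun i hi => ν.eraseCell _ (eq_of_le_of_mem_removableRows hi))
    (fun i hi => mem_lowerCovers.2 (eraseCell_covBy ?_ _)) ?_ ?_).symm
  · exact mem_iff_lt_rowLen.2 (by have := mem_removableRows.1 hi; omega)
  · intro i₁ h₁ i₂ _ he
    have := congrArg cells he
    rw [eraseCell, eraseCell, erase_inj _ (mem_iff_lt_rowLen.2 ?_)] at this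
    · exact (Prod.mk.inj this).1
    · have := mem_removableRows.1 h₁; omega
  · intro μ hμ
    obtain ⟨c, hc, h⟩ := covBy_iff_exists_cells_eq_insert.1 (mem_lowerCovers.1 hμ)
    obtain ⟨i, hi, rfl⟩ := exists_mem_removableRows (mem_of_cells_eq_insert h)
      (eq_of_le_of_cells_eq_insert h hc)
    exact ⟨i, hi, (eq_eraseCell_of_cells_eq_insert h hc).symm⟩

theorem card_upperCovers (μ : YoungDiagram) : #μ.upperCovers = #μ.lowerCovers + 1 := by
  rw [card_upperCovers_eq_card_addableRows, card_lowerCovers_eq_card_removableRows,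
    card_addableRows]

theorem upperCovers_inter_upperCovers (hne : μ ≠ ν) (hc : μ.card = ν.card) :
    μ.upperCovers ∩ ν.upperCovers =
      ({μ ⊔ ν} : Finset YoungDiagram).filter (·.card = μ.card + 1) := by
  ext ρ
  simp only [mem_inter, mem_upperCovers, covBy_iff_le_and_card_eq, mem_filter, mem_singleton]
  constructor
  · rintro ⟨⟨hμ, hρ⟩, hν, -⟩
    have hlt : μ < μ ⊔ ν := lt_of_le_of_ne le_sup_left fun h =>
      hne (eq_of_le_of_card_le (le_sup_right.trans_eq h.symm) hc.le).symm
    have := card_lt_card_of_lt hlt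
    exact ⟨(eq_of_le_of_card_le (sup_le hμ hν) (by omega)).symm, hρ⟩
  · rintro ⟨rfl, h⟩
    exact ⟨⟨le_sup_left, h⟩, le_sup_right, by omega⟩

theorem lowerCovers_inter_lowerCovers (hne : μ ≠ ν) (hc : μ.card = ν.card) :
    μ.lowerCovers ∩ ν.lowerCovers =
      ({μ ⊓ ν} : Finset YoungDiagram).filter (·.card + 1 = μ.card) := by
  ext ρ
  simp only [mem_inter, mem_lowerCovers, covBy_iff_le_and_card_eq, mem_filter, mem_singleton]
  constructor
  · rintro ⟨⟨hμ, hρ⟩, hν, -⟩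
    have hlt : μ ⊓ ν < μ := lt_of_le_of_ne inf_le_left fun h =>
      hne (eq_of_le_of_card_le (h.symm.trans_le inf_le_right) hc.ge)
    have := card_lt_card_of_lt hlt
    exact ⟨eq_of_le_of_card_le (le_inf hμ hν) (by omega), hρ.symm⟩
  · rintro ⟨rfl, h⟩
    exact ⟨⟨inf_le_left, h.symm⟩, inf_le_right, by omega⟩

theorem card_upperCovers_inter_upperCovers (hc : μ.card = ν.card) :
    #(μ.upperCovers ∩ ν.upperCovers) =
      #(μ.lowerCovers ∩ ν.lowerCovers) + if μ = ν then 1 else 0 := by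
  by_cases hne : μ = ν
  · subst hne
    simp only [inter_self, if_true, card_upperCovers]
  rw [upperCovers_inter_upperCovers hne hc, lowerCovers_inter_lowerCovers hne hc, if_neg hne,
    filter_singleton, filter_singleton]
  have := card_sup_add_card_inf μ ν
  split_ifs <;> simp <;> omega

theorem sum_level_sum_lowerCovers {M : Type*} [AddCommMonoid M] (n : ℕ)
    (g : YoungDiagram → YoungDiagram → M) :
    ∑ ν ∈ level (n + 1), ∑ μ ∈ ν.lowerCovers, g μ ν =
      ∑ μ ∈ level n, ∑ ν ∈ μ.upperCovers, g μ ν := by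
  refine sum_comm' fun ν μ => ?_
  simp only [mem_level, mem_lowerCovers, mem_upperCovers]
  exact ⟨fun ⟨_, h⟩ => ⟨h, by have := card_eq_of_covBy h; omega⟩,
    fun ⟨h, _⟩ => ⟨by have := card_eq_of_covBy h; omega, h⟩⟩

-- The relation `DU = UD + I` between the up and down operators of Young's lattice.
theorem sum_upperCovers_sum_lowerCovers {M : Type*} [AddCommMonoid M] (g : YoungDiagram → M)
    (ρ : YoungDiagram) :
    ∑ ν ∈ ρ.upperCovers, ∑ μ ∈ ν.lowerCovers, g μ =
      ∑ σ ∈ ρ.lowerCovers, ∑ μ ∈ σ.upperCovers, g μ + g ρ := by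
  have hup : ∑ ν ∈ ρ.upperCovers, ∑ μ ∈ ν.lowerCovers, g μ =
      ∑ μ ∈ level ρ.card, #(ρ.upperCovers ∩ μ.upperCovers) • g μ := by
    simp only [← sum_const]
    refine sum_comm' fun ν μ => ?_
    simp only [mem_level, mem_lowerCovers, mem_upperCovers, mem_inter]
    exact ⟨fun h => ⟨h, by have := card_eq_of_covBy h.1; have := card_eq_of_covBy h.2; omega⟩,
      fun h => h.1⟩
  have hdown : ∑ σ ∈ ρ.lowerCovers, ∑ μ ∈ σ.upperCovers, g μ =
      ∑ μ ∈ level ρ.card, #(ρ.lowerCovers ∩ μ.lowerCovers) • g μ := by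
    simp only [← sum_const]
    refine sum_comm' fun σ μ => ?_
    simp only [mem_level, mem_lowerCovers, mem_upperCovers, mem_inter]
    exact ⟨fun h => ⟨h, by have := card_eq_of_covBy h.1; have := card_eq_of_covBy h.2; omega⟩,
      fun h => h.1⟩
  rw [hup, hdown]
  calc ∑ μ ∈ level ρ.card, #(ρ.upperCovers ∩ μ.upperCovers) • g μ
      = ∑ μ ∈ level ρ.card,
          (#(ρ.lowerCovers ∩ μ.lowerCovers) • g μ + if ρ = μ then g μ else 0) :=
        sum_congr rfl fun μ hμ => by
          rw [card_upperCovers_inter_upperCovers (mem_level.1 hμ).symm, add_smul, ite_smul,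
            one_smul, zero_smul]
    _ = _ := by rw [sum_add_distrib, sum_ite_eq, if_pos (mem_level.2 rfl)]

/-! ### Standard Young tableaux -/

def standardTableaux (ν : YoungDiagram) : Set (ℕ × ℕ → ℕ) := {f | IsSkewSYT ⊥ ν f}

theorem dimSkew_bot_eq_ncard (ν : YoungDiagram) : dimSkew ⊥ ν = ν.standardTableaux.ncard := rfl

theorem mem_standardTableaux {f : ℕ × ℕ → ℕ} :
    f ∈ ν.standardTableaux ↔ (∀ c ∉ ν, f c = 0) ∧
      Set.BijOn f ν (Set.Icc 1 ν.card) ∧ StrictMonoOn f ν := by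
  simp only [standardTableaux, IsSkewSYT, Set.mem_ofPred_eq, cells_bot, sdiff_empty, mem_cells]
  refine and_congr_right fun _ => and_congr_right fun hbij => ⟨?_, fun hmono => ?_⟩
  · rintro ⟨hrow, hcol⟩ ⟨i, j⟩ hx ⟨i', j'⟩ hy hlt
    obtain ⟨hi, hj⟩ := Prod.mk_le_mk.1 hlt.le
    have hcorner : (i, j') ∈ ν := ν.up_left_mem hi le_rfl hy
    have h₁ : f (i, j) ≤ f (i, j') := by
      rcases hj.lt_or_eq with hj | rfl
      exacts [(hrow i j j' hx hcorner hj).le, le_rfl]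
    have h₂ : f (i, j') ≤ f (i', j') := by
      rcases hi.lt_or_eq with hi | rfl
      exacts [(hcol i i' j' hcorner hy hi).le, le_rfl]
    exact lt_of_le_of_ne (h₁.trans h₂) fun h => hlt.ne (hbij.injOn hx hy h)
  · exact ⟨fun i j₁ j₂ h₁ h₂ hj => hmono h₁ h₂ (Prod.mk_lt_mk_iff_right.2 hj),
      fun i₁ i₂ j h₁ h₂ hi => hmono h₁ h₂ (Prod.mk_lt_mk_iff_left.2 hi)⟩

theorem finite_standardTableaux (ν : YoungDiagram) : ν.standardTableaux.Finite := by
  have hinj : Set.InjOn (fun f : ℕ × ℕ → ℕ => fun c : ν.cells => f c) ν.standardTableaux := by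
    intro f hf g hg hfg
    funext c
    by_cases hc : c ∈ ν
    · exact congrFun hfg ⟨c, hc⟩
    · rw [(mem_standardTableaux.1 hf).1 c hc, (mem_standardTableaux.1 hg).1 c hc]
  refine Set.Finite.of_finite_image ((Set.Finite.pi fun _ => Set.finite_Iic ν.card).subset ?_) hinj
  rintro _ ⟨f, hf, rfl⟩ c -
  exact ((mem_standardTableaux.1 hf).2.1.mapsTo c.2).2

theorem dimSkew_bot_bot : dimSkew ⊥ ⊥ = 1 := by
  have : (⊥ : YoungDiagram).standardTableaux = {0} := by
    ext f
    simp [mem_standardTableaux, card_bot, funext_iff, coe_bot, Set.subsingleton_empty.strictMonoOn]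
  rw [dimSkew_bot_eq_ncard, this, Set.ncard_singleton]

theorem update_card_mem_standardTableaux {g : ℕ × ℕ → ℕ} (hg : g ∈ μ.standardTableaux)
    (hc : c ∉ μ) (h : ν.cells = insert c μ.cells) :
    Function.update g c ν.card ∈ ν.standardTableaux := by
  obtain ⟨hvan, hbij, hmono⟩ := mem_standardTableaux.1 hg
  have hcard := card_eq_of_cells_eq_insert h hc
  have hν := coe_eq_insert_of_cells_eq_insert h
  have heq : Set.EqOn (Function.update g c ν.card) g μ :=
    fun x hx => Function.update_of_ne (ne_of_mem_of_not_mem hx hc) _ _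
  refine mem_standardTableaux.2 ⟨fun x hx => ?_, ?_, fun x hx y hy hxy => ?_⟩
  · rw [← SetLike.mem_coe, hν, Set.mem_insert_iff, not_or] at hx
    rw [Function.update_of_ne hx.1, hvan x hx.2]
  · have hcN : Function.update g c ν.card c ∉ Set.Icc 1 μ.card := by
      rw [Function.update_self, hcard]
      simp
    have := (hbij.congr heq.symm).insert hcN
    rwa [Function.update_self, hcard, Set.insert_Icc_right_eq_Icc_add_one (by omega), ← hcard,
      ← hν] at this
  · rw [hν] at hx hy
    have hxμ : x ∈ μ := by
      rcases hx with rfl | hx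
      · rcases hy with rfl | hy
        exacts [absurd hxy (lt_irrefl _), absurd (μ.isLowerSet hxy.le hy) hc]
      · exact hx
    rw [heq hxμ]
    rcases hy with rfl | hy
    · rw [Function.update_self, hcard]
      exact Nat.lt_succ_of_le (hbij.mapsTo hxμ).2
    · rw [heq hy]
      exact hmono hxμ hy hxy

theorem update_zero_mem_standardTableaux {f : ℕ × ℕ → ℕ} (hf : f ∈ ν.standardTableaux)
    (hfc : f c = ν.card) (hc : c ∉ μ) (h : ν.cells = insert c μ.cells) :
    Function.update f c 0 ∈ μ.standardTableaux := by
  obtain ⟨hvan, hbij, hmono⟩ := mem_standardTableaux.1 hf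
  have hcard := card_eq_of_cells_eq_insert h hc
  have hν := coe_eq_insert_of_cells_eq_insert h
  have heq : Set.EqOn (Function.update f c 0) f μ :=
    fun x hx => Function.update_of_ne (ne_of_mem_of_not_mem hx hc) _ _
  refine mem_standardTableaux.2 ⟨fun x hx => ?_, ?_, ?_⟩
  · by_cases hxc : x = c
    · rw [hxc, Function.update_self]
    · rw [Function.update_of_ne hxc]
      exact hvan x (by rw [← SetLike.mem_coe, hν]; exact fun h' => h'.elim hxc hx)
  · have := hbij.sdiff_singleton (a := c) (by rw [hν]; exact Set.mem_insert c _)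
    rw [hν, Set.insert_sdiff_self_of_notMem hc, hfc, hcard,
      ← Set.insert_Icc_right_eq_Icc_add_one (by omega),
      Set.insert_sdiff_self_of_notMem (by simp)] at this
    exact this.congr heq.symm
  · refine (heq.congr_strictMonoOn).2 (hmono.mono ?_)
    rw [hν]
    exact Set.subset_insert c _

theorem ncard_standardTableaux_eq_ncard_apply_eq_card (hc : c ∉ μ)
    (h : ν.cells = insert c μ.cells) :
    μ.standardTableaux.ncard = {f ∈ ν.standardTableaux | f c = ν.card}.ncard := by
  refine Set.BijOn.ncard_eq (f := fun g => Function.update g c ν.card)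
    (Set.InvOn.bijOn (f' := fun f => Function.update f c 0) ⟨fun g hg => ?_, fun f hf => ?_⟩
      (fun g hg => ⟨update_card_mem_standardTableaux hg hc h, Function.update_self ..⟩)
      (fun f hf => update_zero_mem_standardTableaux hf.1 hf.2 hc h))
  · have hgc : g c = 0 := (mem_standardTableaux.1 hg).1 c hc
    simp only [Function.update_idem, ← hgc, Function.update_eq_self]
  · simp only [Function.update_idem, ← hf.2, Function.update_eq_self]

/-! ### The branching rule and the sum of squares -/

theorem dimSkew_bot_eq_ncard_of_covBy (h : μ ⋖ ν) :
    dimSkew ⊥ μ = {f ∈ ν.standardTableaux | ∀ x ∈ ν, x ∉ μ → f x = ν.card}.ncard := by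
  obtain ⟨c, hc, hν⟩ := covBy_iff_exists_cells_eq_insert.1 h
  have hmem : ∀ x ∈ ν, x ∉ μ → x = c := fun x hx hxμ => by
    rw [← mem_cells, hν] at hx
    exact (mem_insert.1 hx).resolve_right hxμ
  rw [dimSkew_bot_eq_ncard, ncard_standardTableaux_eq_ncard_apply_eq_card hc hν]
  refine congrArg Set.ncard (Set.sep_ext_iff.2 fun f _ => ?_)
  exact ⟨fun hfc x hx hxμ => hmem x hx hxμ ▸ hfc,
    fun hf => hf c (mem_of_cells_eq_insert hν) hc⟩

theorem exists_covBy_of_mem_standardTableaux {f : ℕ × ℕ → ℕ} (hf : f ∈ ν.standardTableaux)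
    (hν : 0 < ν.card) : ∃ μ, μ ⋖ ν ∧ ∀ x ∈ ν, x ∉ μ → f x = ν.card := by
  obtain ⟨-, hbij, hmono⟩ := mem_standardTableaux.1 hf
  obtain ⟨c, hc, hfc⟩ := hbij.surjOn (Set.right_mem_Icc.2 hν)
  have hmax : ∀ x ∈ ν, c ≤ x → x = c := fun x hx hcx => by
    by_contra hne
    have := hmono hc hx (lt_of_le_of_ne hcx (Ne.symm hne))
    have := (hbij.mapsTo hx).2
    omega
  refine ⟨ν.eraseCell c hmax, eraseCell_covBy hc hmax, fun x hx hxμ => ?_⟩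
  have : x = c := by_contra fun hne => hxμ (mem_erase.2 ⟨hne, hx⟩)
  rwa [this]

theorem eq_of_covBy_of_mem_standardTableaux {μ₁ μ₂ : YoungDiagram} {f : ℕ × ℕ → ℕ}
    (hf : f ∈ ν.standardTableaux) (h₁ : μ₁ ⋖ ν) (h₂ : μ₂ ⋖ ν)
    (hf₁ : ∀ x ∈ ν, x ∉ μ₁ → f x = ν.card) (hf₂ : ∀ x ∈ ν, x ∉ μ₂ → f x = ν.card) :
    μ₁ = μ₂ := by
  obtain ⟨c₁, hc₁, hν₁⟩ := covBy_iff_exists_cells_eq_insert.1 h₁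
  obtain ⟨c₂, hc₂, hν₂⟩ := covBy_iff_exists_cells_eq_insert.1 h₂
  have hm₁ := mem_of_cells_eq_insert hν₁
  have hm₂ := mem_of_cells_eq_insert hν₂
  obtain rfl : c₁ = c₂ := (mem_standardTableaux.1 hf).2.1.injOn hm₁ hm₂
    ((hf₁ c₁ hm₁ hc₁).trans (hf₂ c₂ hm₂ hc₂).symm)
  rw [eq_eraseCell_of_cells_eq_insert hν₁ hc₁, eq_eraseCell_of_cells_eq_insert hν₂ hc₂]

theorem dimSkew_bot_eq_sum_lowerCovers (hν : 0 < ν.card) :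
    dimSkew ⊥ ν = ∑ μ ∈ ν.lowerCovers, dimSkew ⊥ μ := by
  set S := ν.finite_standardTableaux.toFinset with hS
  have hmemS : ∀ f, f ∈ S ↔ f ∈ ν.standardTableaux := fun f => Set.Finite.mem_toFinset _
  let fiber (μ : YoungDiagram) := S.filter fun f => ∀ x ∈ ν, x ∉ μ → f x = ν.card
  have hunion : S = ν.lowerCovers.biUnion fiber := by
    ext f
    simp only [mem_biUnion, mem_filter, mem_lowerCovers, fiber]
    refine ⟨fun hf => ?_, fun ⟨_, _, hf, _⟩ => hf⟩
    obtain ⟨μ, hμ, hfμ⟩ := exists_covBy_of_mem_standardTableaux ((hmemS f).1 hf) hν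
    exact ⟨μ, hμ, hf, hfμ⟩
  have hdisj : (ν.lowerCovers : Set YoungDiagram).PairwiseDisjoint fiber :=
    fun μ₁ h₁ μ₂ h₂ hne => disjoint_left.2 fun f hf₁ hf₂ => hne <|
      eq_of_covBy_of_mem_standardTableaux ((hmemS f).1 (mem_filter.1 hf₁).1)
        (mem_lowerCovers.1 h₁) (mem_lowerCovers.1 h₂) (mem_filter.1 hf₁).2 (mem_filter.1 hf₂).2
  rw [dimSkew_bot_eq_ncard, Set.ncard_eq_toFinset_card _ ν.finite_standardTableaux, ← hS,
    hunion, card_biUnion hdisj]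
  refine sum_congr rfl fun μ hμ => ?_
  rw [dimSkew_bot_eq_ncard_of_covBy (mem_lowerCovers.1 hμ), ← Set.ncard_coe_finset]
  congr 1
  ext f
  simp [fiber, hmemS]

theorem sum_dimSkew_bot_upperCovers (ρ : YoungDiagram) :
    ∑ ν ∈ ρ.upperCovers, dimSkew ⊥ ν = (ρ.card + 1) * dimSkew ⊥ ρ := by
  have ih : ∀ σ ∈ ρ.lowerCovers,
      ∑ ν ∈ σ.upperCovers, dimSkew ⊥ ν = ρ.card * dimSkew ⊥ σ := fun σ hσ => by
    rw [sum_dimSkew_bot_upperCovers σ, card_eq_of_covBy (mem_lowerCovers.1 hσ)]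
  calc ∑ ν ∈ ρ.upperCovers, dimSkew ⊥ ν
      = ∑ ν ∈ ρ.upperCovers, ∑ μ ∈ ν.lowerCovers, dimSkew ⊥ μ :=
        sum_congr rfl fun ν hν => dimSkew_bot_eq_sum_lowerCovers
          (by rw [card_eq_of_covBy (mem_upperCovers.1 hν)]; omega)
    _ = ∑ σ ∈ ρ.lowerCovers, ∑ μ ∈ σ.upperCovers, dimSkew ⊥ μ + dimSkew ⊥ ρ :=
        sum_upperCovers_sum_lowerCovers _ ρ
    _ = ρ.card * ∑ σ ∈ ρ.lowerCovers, dimSkew ⊥ σ + dimSkew ⊥ ρ := by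
        rw [sum_congr rfl ih, mul_sum]
    _ = (ρ.card + 1) * dimSkew ⊥ ρ := by
        rcases Nat.eq_zero_or_pos ρ.card with h | h
        · simp [h]
        · rw [← dimSkew_bot_eq_sum_lowerCovers h]
          ring
termination_by ρ.card
decreasing_by
  have := card_eq_of_covBy (mem_lowerCovers.1 hσ)
  omega

theorem sum_level_dimSkew_bot_sq (n : ℕ) : ∑ ν ∈ level n, dimSkew ⊥ ν ^ 2 = n.factorial := by
  induction n with
  | zero => simp [level_zero, dimSkew_bot_bot]
  | succ n ih =>
    calc ∑ ν ∈ level (n + 1), dimSkew ⊥ ν ^ 2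
        = ∑ ν ∈ level (n + 1), ∑ μ ∈ ν.lowerCovers, dimSkew ⊥ μ * dimSkew ⊥ ν :=
          sum_congr rfl fun ν hν => by
            rw [← sum_mul, ← dimSkew_bot_eq_sum_lowerCovers (by rw [mem_level.1 hν]; omega), sq]
      _ = ∑ μ ∈ level n, ∑ ν ∈ μ.upperCovers, dimSkew ⊥ μ * dimSkew ⊥ ν :=
          sum_level_sum_lowerCovers n _
      _ = ∑ μ ∈ level n, (n + 1) * dimSkew ⊥ μ ^ 2 :=
          sum_congr rfl fun μ hμ => by
            rw [← mul_sum, sum_dimSkew_bot_upperCovers, mem_level.1 hμ]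
            ring
      _ = (n + 1).factorial := by rw [← mul_sum, ih, Nat.factorial_succ]

theorem sum_level_poissonizedPlancherel (θ : ℝ) (n : ℕ) :
    ∑ ν ∈ level n,
        Real.exp (-θ ^ 2) * ((dimSkew ⊥ ν : ℝ) * θ ^ ν.card / (Nat.factorial ν.card : ℝ)) ^ 2 =
      Real.exp (-θ ^ 2) * (θ ^ 2) ^ n / n.factorial := by
  have hsq : ∑ ν ∈ level n, (dimSkew ⊥ ν : ℝ) ^ 2 = n.factorial := by
    exact_mod_cast sum_level_dimSkew_bot_sq n
  have hfac : (n.factorial : ℝ) ≠ 0 := by positivity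
  calc ∑ ν ∈ level n,
        Real.exp (-θ ^ 2) * ((dimSkew ⊥ ν : ℝ) * θ ^ ν.card / (Nat.factorial ν.card : ℝ)) ^ 2
      = Real.exp (-θ ^ 2) * (θ ^ 2) ^ n / n.factorial ^ 2 *
          ∑ ν ∈ level n, (dimSkew ⊥ ν : ℝ) ^ 2 := by
        rw [mul_sum]
        refine sum_congr rfl fun ν hν => ?_
        rw [mem_level.1 hν]
        ring
    _ = Real.exp (-θ ^ 2) * (θ ^ 2) ^ n / n.factorial := by
        rw [hsq]
        field_simp

end YoungDiagram

/-- The Poissonized Plancherel measure of parameter `θ` is a probability distribution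
on the set of Young diagrams. -/
theorem poissonizedPlancherel_hasSum_one (θ : ℝ) :
    HasSum (fun ν : YoungDiagram =>
      Real.exp (-θ ^ 2) * ((dimSkew ⊥ ν : ℝ) * θ ^ ν.card / (Nat.factorial ν.card : ℝ)) ^ 2)
      1 := by
  refine hasSum_of_hasSum_sum_fiberwise_of_nonneg (fun ν => by positivity)
    (fun n ν => YoungDiagram.mem_level (n := n) (ν := ν)) ?_
  simp only [YoungDiagram.sum_level_poissonizedPlancherel]
  exact ProbabilityTheory.hasSum_one_poissonMeasure ⟨θ ^ 2, sq_nonneg θ⟩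
end

section
/- Let N ∈ ℕ, let μ ⊆ λ be Young diagrams each with at most N rows, and let t ∈ ℝ. Define the N × N real matrix M by M_{a,b} = t^{e(a,b)}/e(a,b)! when e(a,b) := (λ_b − b) − (μ_a − a) ≥ 0, and M_{a,b} = 0 when e(a,b) < 0, for a, b ∈ {1, ..., N}. Then det M = dim(λ/μ) · t^{|λ|−|μ|}/(|λ|−|μ|)!. This is the Jacobi–Trudi identity evaluated at the Plancherel specialization, which identifies the Karlin–McGregor determinants of Poisson transition weights with skew Schur function values in the proof that the Poissonized RS line ensemble is a family of non-intersecting Poisson arches. -/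
open Finset Function
open scoped Nat

section StdLabeling

variable {α : Type*} [Preorder α]

/-- A linear extension of the finite poset `s`, numbered `1, …, #s`. -/
def IsStdLabeling (s : Finset α) (f : α → ℕ) : Prop :=
  (∀ c ∉ s, f c = 0) ∧ Set.BijOn f s (Set.Icc 1 #s) ∧ StrictMonoOn f s

def stdLabelings (s : Finset α) : Set (α → ℕ) := {f | IsStdLabeling s f}

namespace IsStdLabeling

variable {s : Finset α} {f g : α → ℕ} {p : α}

lemma apply_le_card (hf : IsStdLabeling s f) {c : α} (hc : c ∈ s) : f c ≤ #s :=
  (hf.2.1.mapsTo hc).2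

lemma maximal_of_apply_eq_card (hf : IsStdLabeling s f) (hs : s.Nonempty) (hp : f p = #s) :
    Maximal (· ∈ s) p := by
  have hps : p ∈ s := by
    by_contra h
    have := hf.1 p h
    have := hs.card_pos
    omega
  refine ⟨hps, fun c hc hpc => ?_⟩
  by_contra hcp
  have := hf.2.2 hps hc (lt_of_le_not_ge hpc hcp)
  have := hf.apply_le_card hc
  omega

variable [DecidableEq α]

lemma erase (hf : IsStdLabeling s f) (hp : p ∈ s) (hfp : f p = #s) :
    IsStdLabeling (s.erase p) (update f p 0) := by
  have heq : Set.EqOn f (update f p 0) (s.erase p) := fun c hc =>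
    (update_of_ne (ne_of_mem_erase hc) _ _).symm
  refine ⟨fun c hc => ?_, ?_, (hf.2.2.mono (coe_subset.2 (erase_subset p s))).congr heq⟩
  · rcases eq_or_ne c p with rfl | hcp
    · exact update_self _ _ _
    · rw [update_of_ne hcp]
      exact hf.1 c fun hcs => hc (mem_erase.2 ⟨hcp, hcs⟩)
  · rw [coe_erase]
    convert (hf.2.1.sdiff_singleton hp).congr (by simpa using heq) using 1
    ext k
    simp only [card_erase_of_mem hp, Set.mem_Icc, hfp, Set.Icc_sdiff_right, Set.mem_Ico]
    omega

lemma of_erase (hp : Maximal (· ∈ s) p) (hg : IsStdLabeling (s.erase p) g) :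
    IsStdLabeling s (update g p #s) := by
  have hcard : #(s.erase p) + 1 = #s := card_erase_add_one hp.1
  have heq : Set.EqOn g (update g p #s) (s.erase p) := fun c hc =>
    (update_of_ne (ne_of_mem_erase hc) _ _).symm
  refine ⟨fun c hc => ?_, ?_, ?_⟩
  · have hcp : c ≠ p := fun h => hc (h ▸ hp.1)
    rw [update_of_ne hcp]
    exact hg.1 c fun hcs => hc (mem_of_mem_erase hcs)
  · have := (hg.2.1.congr heq).insert (a := p) (by simp only [update_self, Set.mem_Icc]; omega)
    rw [← coe_insert, insert_erase hp.1, update_self] at this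
    convert this using 1
    ext k
    simp only [Set.mem_Icc, Set.mem_insert_iff]
    omega
  · intro c hc d hd hcd
    rcases eq_or_ne d p with rfl | hdp
    · have hcp : c ≠ d := hcd.ne
      rw [update_of_ne hcp, update_self]
      have := hg.apply_le_card (mem_erase.2 ⟨hcp, hc⟩)
      omega
    · have hcp : c ≠ p := fun h => (h ▸ hcd).not_ge (hp.2 hd (h ▸ hcd).le)
      rw [update_of_ne hcp, update_of_ne hdp]
      exact hg.2.2 (mem_erase.2 ⟨hcp, hc⟩) (mem_erase.2 ⟨hdp, hd⟩) hcd

end IsStdLabeling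

variable {s : Finset α}

lemma stdLabelings_empty : stdLabelings (∅ : Finset α) = {0} := by
  ext f
  refine ⟨fun h => funext fun c => h.1 c (notMem_empty c), fun h => ⟨fun c _ => by
    rw [Set.mem_singleton_iff.1 h]; rfl, ?_, by simp [StrictMonoOn]⟩⟩
  simp

lemma finite_stdLabelings (s : Finset α) : (stdLabelings s).Finite := by
  refine Set.Finite.of_finite_image (f := fun f (c : s) => f c) ?_ fun f hf g hg hfg => ?_
  · refine (Set.Finite.pi (t := fun _ : s => Set.Iic #s) fun _ => Set.finite_Iic _).subset ?_
    rintro _ ⟨f, hf, rfl⟩ c -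
    exact hf.apply_le_card c.2
  · funext c
    by_cases hc : c ∈ s
    · exact congrFun hfg ⟨c, hc⟩
    · rw [hf.1 c hc, hg.1 c hc]

variable [DecidableEq α]

lemma ncard_stdLabelings_apply_eq_card {p : α} (hp : Maximal (· ∈ s) p) :
    {f ∈ stdLabelings s | f p = #s}.ncard = (stdLabelings (s.erase p)).ncard := by
  refine Set.ncard_congr (fun f _ => update f p 0) (fun f hf => hf.1.erase hp.1 hf.2)
    (fun f g hf hg hfg => ?_) fun g hg => ⟨update g p #s, ⟨hg.of_erase hp, update_self ..⟩, ?_⟩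
  · calc f = update (update f p 0) p #s := by rw [update_idem, ← hf.2, update_eq_self]
      _ = g := by rw [hfg, update_idem, ← hg.2, update_eq_self]
  · rw [update_idem, ← hg.1 p (notMem_erase p s), update_eq_self]

open scoped Classical in
lemma ncard_stdLabelings_eq_sum (hs : s.Nonempty) :
    (stdLabelings s).ncard =
      ∑ p ∈ s with Maximal (· ∈ s) p, (stdLabelings (s.erase p)).ncard := by
  have hunion : stdLabelings s = ⋃ p ∈ (s : Set α), {f ∈ stdLabelings s | f p = #s} := by
    ext f
    simp only [Set.mem_iUnion, Set.mem_ofPred_eq, exists_prop]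
    refine ⟨fun hf => ?_, fun ⟨_, _, hf, _⟩ => hf⟩
    obtain ⟨p, hp, hfp⟩ := hf.2.1.surjOn (Set.mem_Icc.2 ⟨hs.card_pos, le_rfl⟩)
    exact ⟨p, hp, hf, hfp⟩
  have hdisj : (s : Set α).PairwiseDisjoint fun p => {f ∈ stdLabelings s | f p = #s} :=
    fun p hp q hq hpq => Set.disjoint_left.2 fun f hfp hfq =>
      hpq (hfp.1.2.1.injOn hp hq (hfp.2.trans hfq.2.symm))
  rw [hunion, s.finite_toSet.ncard_biUnion (fun p _ => (finite_stdLabelings s).subset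
    fun f hf => hf.1) hdisj, finsum_mem_coe_finset, sum_filter]
  refine sum_congr rfl fun p _ => ?_
  split_ifs with hp
  · exact ncard_stdLabelings_apply_eq_card hp
  · have : {f ∈ stdLabelings s | f p = #s} = ∅ :=
      Set.eq_empty_of_forall_notMem fun f hf => hp (hf.1.maximal_of_apply_eq_card hs hf.2)
    rw [this, Set.ncard_empty]

end StdLabeling

noncomputable def invFactorial (e : ℤ) : ℝ := if 0 ≤ e then ((e.toNat)! : ℝ)⁻¹ else 0

lemma invFactorial_of_neg {e : ℤ} (h : e < 0) : invFactorial e = 0 := if_neg h.not_ge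

lemma invFactorial_zero : invFactorial 0 = 1 := by simp [invFactorial]

lemma intCast_mul_invFactorial (e : ℤ) : (e : ℝ) * invFactorial e = invFactorial (e - 1) := by
  rcases lt_trichotomy e 0 with h | rfl | h
  · rw [invFactorial_of_neg h, invFactorial_of_neg (by omega), mul_zero]
  · simp [invFactorial]
  · lift e to ℕ using h.le
    obtain ⟨m, rfl⟩ := Nat.exists_eq_add_one_of_ne_zero (by omega : e ≠ 0)
    simp only [invFactorial, Nat.cast_nonneg, if_true, Int.toNat_natCast, Nat.factorial_succ]
    push_cast
    rw [add_sub_cancel_right, if_pos (by positivity), Int.toNat_natCast]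
    field_simp

lemma ite_div_factorial_eq_pow_mul_invFactorial (t : ℝ) (e : ℤ) :
    (if 0 ≤ e then t ^ e.toNat / ((e.toNat)! : ℝ) else 0) = t ^ e.toNat * invFactorial e := by
  unfold invFactorial
  split_ifs <;> simp [div_eq_mul_inv]

section Matrix

variable {n : Type*} [Fintype n] [DecidableEq n]

noncomputable def invFactorialMatrix (x y : n → ℤ) : Matrix n n ℝ :=
  Matrix.of fun a b => invFactorial (y b - x a)

lemma det_pow_div_factorial_eq (t : ℝ) {x y : n → ℤ} {k : ℕ} (hk : ∑ b, y b - ∑ a, x a = k) :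
    (Matrix.of fun a b =>
      if 0 ≤ y b - x a then t ^ (y b - x a).toNat / (((y b - x a).toNat)! : ℝ) else 0).det =
      t ^ k * (invFactorialMatrix x y).det := by
  simp only [Matrix.det_apply, invFactorialMatrix, Matrix.of_apply, mul_sum,
    ite_div_factorial_eq_pow_mul_invFactorial, prod_mul_distrib, prod_pow_eq_pow_sum]
  refine sum_congr rfl fun σ _ => ?_
  by_cases hσ : ∀ i, 0 ≤ y i - x (σ i)
  · have : ∑ i, (y i - x (σ i)).toNat = k := by
      zify [hσ]
      rw [sum_congr rfl fun i _ => Int.toNat_of_nonneg (hσ i), sum_sub_distrib,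
        Equiv.sum_comp σ x, hk]
    rw [this, mul_smul_comm]
  · push Not at hσ
    obtain ⟨i, hi⟩ := hσ
    rw [prod_eq_zero (mem_univ i) (invFactorial_of_neg hi)]
    simp

lemma intCast_sum_sub_mul_det_invFactorialMatrix (x y : n → ℤ) :
    ((∑ b, y b - ∑ a, x a : ℤ) : ℝ) * (invFactorialMatrix x y).det =
      ∑ b, (invFactorialMatrix x (update y b (y b - 1))).det := by
  simp only [Matrix.det_apply, invFactorialMatrix, Matrix.of_apply, mul_sum]
  rw [sum_comm]
  refine sum_congr rfl fun σ _ => ?_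
  have hprod : ∀ b, ∏ i, invFactorial (update y b (y b - 1) i - x (σ i)) =
      ((y b - x (σ b) : ℤ) : ℝ) * ∏ i, invFactorial (y i - x (σ i)) := by
    intro b
    have : (fun i => invFactorial (update y b (y b - 1) i - x (σ i))) =
        update (fun i => invFactorial (y i - x (σ i))) b (invFactorial (y b - 1 - x (σ b))) := by
      ext i
      rcases eq_or_ne i b with rfl | h <;> simp [*]
    rw [this, prod_update_of_mem (mem_univ b), ← mul_prod_erase univ _ (mem_univ b), ← mul_assoc,
      intCast_mul_invFactorial, sdiff_singleton_eq_erase, sub_right_comm]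
  simp only [hprod]
  rw [← smul_sum, ← sum_mul, ← Int.cast_sum, sum_sub_distrib, Equiv.sum_comp σ x, mul_smul_comm]

lemma det_invFactorialMatrix_self {N : ℕ} {x : Fin N → ℤ} (hx : StrictAnti x) :
    (invFactorialMatrix x x).det = 1 := by
  rw [Matrix.det_of_isLowerTriangular (invFactorialMatrix x x) fun a b hab => invFactorial_of_neg
    (by simpa using hx (show a < b from hab))]
  simp [invFactorialMatrix, invFactorial_zero]

lemma Equiv.Perm.exists_le_apply_le {N : ℕ} (σ : Equiv.Perm (Fin N)) (i : Fin N) :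
    ∃ c, i ≤ c ∧ σ c ≤ i := by
  by_contra! h
  have := card_le_card_of_injOn σ (fun c hc => mem_Ioi.2 (h c (mem_Ici.1 hc))) σ.injective.injOn
  simp only [Fin.card_Ici, Fin.card_Ioi] at this
  omega

lemma det_invFactorialMatrix_eq_zero_of_lt {N : ℕ} {x y : Fin N → ℤ} (hx : Antitone x)
    (hy : Antitone y) {i : Fin N} (hi : y i < x i) : (invFactorialMatrix x y).det = 0 := by
  rw [Matrix.det_apply]
  refine sum_eq_zero fun σ _ => ?_
  obtain ⟨c, hic, hci⟩ := σ.exists_le_apply_le i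
  refine smul_eq_zero_of_right _ (prod_eq_zero (mem_univ c) (invFactorial_of_neg ?_))
  linarith [hx hci, hy hic]

end Matrix

namespace YoungDiagram

variable {μ ν : YoungDiagram}

lemma rowLen_eq_of_forall_mem_iff {i m : ℕ} (h : ∀ j, (i, j) ∈ ν ↔ j < m) : ν.rowLen i = m :=
  eq_of_forall_lt_iff fun j => by rw [← mem_iff_lt_rowLen, h]

lemma le_iff_forall_rowLen_le : μ ≤ ν ↔ ∀ i, μ.rowLen i ≤ ν.rowLen i := by
  refine ⟨fun h i => ?_, fun h ⟨i, j⟩ hc => ?_⟩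
  · by_contra! hlt
    exact lt_irrefl _ (mem_iff_lt_rowLen.1 (h (mem_iff_lt_rowLen.2 hlt)))
  · exact mem_iff_lt_rowLen.2 ((mem_iff_lt_rowLen.1 hc).trans_le (h i))

lemma card_eq_sum_rowLen {N : ℕ} (hN : ν.rowLen N = 0) : ν.card = ∑ i ∈ range N, ν.rowLen i := by
  rw [YoungDiagram.card, card_eq_sum_card_fiberwise (f := Prod.fst) (t := range N)]
  · exact sum_congr rfl fun i _ => ν.rowLen_eq_card.symm
  · rintro ⟨i, j⟩ hc
    have := mem_iff_lt_rowLen.1 ((mem_cells _).1 hc)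
    simp only [mem_coe, mem_range]
    by_contra hi
    have := ν.rowLen_anti N i (by omega)
    omega

lemma maximal_mem_iff_rowLen {p : ℕ × ℕ} :
    Maximal (· ∈ ν) p ↔ p.2 + 1 = ν.rowLen p.1 ∧ ν.rowLen (p.1 + 1) ≤ p.2 := by
  obtain ⟨i, j⟩ := p
  dsimp only
  constructor
  · rintro ⟨hp, hmax⟩
    have hright : (i, j + 1) ∉ ν := fun h => by simpa using (hmax h (by simp)).2
    have hbelow : (i + 1, j) ∉ ν := fun h => by simpa using (hmax h (by simp)).1
    rw [mem_iff_lt_rowLen] at hp hright hbelow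
    exact ⟨by omega, by omega⟩
  · rintro ⟨hrow, hbelow⟩
    refine ⟨mem_iff_lt_rowLen.2 (by omega), fun ⟨k, l⟩ hq hpq => ?_⟩
    obtain ⟨hik, hjl⟩ := Prod.mk_le_mk.1 hpq
    have hl := mem_iff_lt_rowLen.1 hq
    have hki : k = i := by
      by_contra hne
      have := ν.rowLen_anti (i + 1) k (by omega)
      omega
    subst hki
    exact Prod.mk_le_mk.2 ⟨le_rfl, by omega⟩

lemma maximal_mem_rowLen_sub_one_iff {i : ℕ} :
    Maximal (· ∈ ν) (i, ν.rowLen i - 1) ↔ ν.rowLen (i + 1) < ν.rowLen i := by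
  rw [maximal_mem_iff_rowLen]
  dsimp only
  omega

lemma maximal_mem_cells_sdiff_iff {p : ℕ × ℕ} :
    Maximal (· ∈ ν.cells \ μ.cells) p ↔ Maximal (· ∈ ν) p ∧ p ∉ μ := by
  simp only [mem_sdiff, mem_cells]
  refine ⟨fun ⟨⟨hpν, hpμ⟩, hmax⟩ => ⟨⟨hpν, fun q hq hpq => hmax ⟨hq, fun hqμ => hpμ ?_⟩ hpq⟩, hpμ⟩,
    fun ⟨⟨hpν, hmax⟩, hpμ⟩ => ⟨⟨hpν, hpμ⟩, fun q hq => hmax hq.1⟩⟩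
  exact μ.isLowerSet hpq hqμ

def erase (ν : YoungDiagram) (p : ℕ × ℕ) (hp : Maximal (· ∈ ν) p) : YoungDiagram where
  cells := ν.cells.erase p
  isLowerSet c d hdc hc := by
    obtain ⟨hcp, hcν⟩ := Finset.mem_erase.1 (mem_coe.1 hc)
    refine mem_coe.2 (Finset.mem_erase.2 ⟨?_, ν.isLowerSet hdc hcν⟩)
    rintro rfl
    exact hcp (le_antisymm (hp.2 hcν hdc) hdc)

variable {p : ℕ × ℕ} {hp : Maximal (· ∈ ν) p}

lemma mem_erase {c : ℕ × ℕ} : c ∈ ν.erase p hp ↔ c ≠ p ∧ c ∈ ν := by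
  rw [← mem_cells, erase, Finset.mem_erase, mem_cells]

lemma cells_erase : (ν.erase p hp).cells = ν.cells.erase p := rfl

lemma card_erase : (ν.erase p hp).card + 1 = ν.card := card_erase_add_one hp.1

lemma erase_le : ν.erase p hp ≤ ν := fun _ hc => (mem_erase.1 hc).2

lemma le_erase_iff : μ ≤ ν.erase p hp ↔ μ ≤ ν ∧ p ∉ μ :=
  ⟨fun h => ⟨h.trans erase_le, fun hpμ => (mem_erase.1 (h hpμ)).1 rfl⟩,
    fun ⟨h, hpμ⟩ _ hc => mem_erase.2 ⟨fun hcp => hpμ (hcp ▸ hc), h hc⟩⟩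

lemma rowLen_erase (i : ℕ) :
    (ν.erase p hp).rowLen i = if i = p.1 then ν.rowLen i - 1 else ν.rowLen i := by
  obtain ⟨k, l⟩ := p
  have hrow : l + 1 = ν.rowLen k := (maximal_mem_iff_rowLen.1 hp).1
  refine rowLen_eq_of_forall_mem_iff fun j => ?_
  rw [mem_erase, mem_iff_lt_rowLen, ne_eq, Prod.mk.injEq]
  dsimp only
  split_ifs with hi
  · subst hi
    constructor <;> intro h <;> omega
  · constructor <;> intro h <;> omega

/-- `λ_{i+1} - (i+1)` in the paper's 1-indexed notation, since rows are indexed from `0` here. -/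
def shiftedRowLen (ν : YoungDiagram) (i : ℕ) : ℤ := ν.rowLen i - (i + 1)

lemma strictAnti_shiftedRowLen : StrictAnti ν.shiftedRowLen := fun i j hij => by
  have := ν.rowLen_anti i j hij.le
  simp only [shiftedRowLen]
  omega

lemma shiftedRowLen_erase :
    (ν.erase p hp).shiftedRowLen = update ν.shiftedRowLen p.1 (ν.shiftedRowLen p.1 - 1) := by
  have := (maximal_mem_iff_rowLen.1 hp).1
  ext i
  rcases eq_or_ne i p.1 with rfl | hi
  · simp only [shiftedRowLen, rowLen_erase, if_pos, update_self]
    omega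
  · simp [shiftedRowLen, rowLen_erase, hi]

lemma sum_shiftedRowLen {N : ℕ} (hN : ν.rowLen N = 0) :
    ∑ i : Fin N, ν.shiftedRowLen i = ν.card - ∑ i : Fin N, ((i : ℤ) + 1) := by
  rw [card_eq_sum_rowLen hN, ← Fin.sum_univ_eq_sum_range]
  simp [shiftedRowLen, sum_sub_distrib]

lemma strictMonoOn_cells_sdiff_iff {f : ℕ × ℕ → ℕ} :
    StrictMonoOn f ↑(ν.cells \ μ.cells) ↔
      (∀ i j₁ j₂ : ℕ, (i, j₁) ∈ ν.cells \ μ.cells → (i, j₂) ∈ ν.cells \ μ.cells →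
        j₁ < j₂ → f (i, j₁) < f (i, j₂)) ∧
      (∀ i₁ i₂ j : ℕ, (i₁, j) ∈ ν.cells \ μ.cells → (i₂, j) ∈ ν.cells \ μ.cells →
        i₁ < i₂ → f (i₁, j) < f (i₂, j)) := by
  refine ⟨fun hf => ⟨fun i j₁ j₂ h₁ h₂ hj => hf h₁ h₂ (Prod.mk_lt_mk_of_le_of_lt le_rfl hj),
    fun i₁ i₂ j h₁ h₂ hi => hf h₁ h₂ (Prod.mk_lt_mk_of_lt_of_le hi le_rfl)⟩, ?_⟩
  rintro ⟨hrow, hcol⟩ ⟨i₁, j₁⟩ hc ⟨i₂, j₂⟩ hd hcd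
  simp only [mem_coe, mem_sdiff, mem_cells] at hc hd
  -- `(i₁, j₂)` lies between the two cells, hence in the skew shape
  have hm : (i₁, j₂) ∈ ν.cells \ μ.cells := by
    simp only [mem_sdiff, mem_cells]
    exact ⟨ν.isLowerSet (Prod.mk_le_mk.2 ⟨(Prod.mk_le_mk.1 hcd.le).1, le_rfl⟩) hd.1,
      fun h => hc.2 (μ.isLowerSet (Prod.mk_le_mk.2 ⟨le_rfl, (Prod.mk_le_mk.1 hcd.le).2⟩) h)⟩
  have hc' : (i₁, j₁) ∈ ν.cells \ μ.cells := by simpa using hc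
  have hd' : (i₂, j₂) ∈ ν.cells \ μ.cells := by simpa using hd
  rcases Prod.lt_iff.1 hcd with ⟨hi, hj⟩ | ⟨hi, hj⟩
  · calc f (i₁, j₁) ≤ f (i₁, j₂) := by
          rcases hj.eq_or_lt with rfl | hj
          · exact le_rfl
          · exact (hrow _ _ _ hc' hm hj).le
      _ < f (i₂, j₂) := hcol _ _ _ hm hd' hi
  · calc f (i₁, j₁) < f (i₁, j₂) := hrow _ _ _ hc' hm hj
      _ ≤ f (i₂, j₂) := by
          rcases hi.eq_or_lt with rfl | hi
          · exact le_rfl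
          · exact (hcol _ _ _ hm hd' hi).le

variable {N : ℕ}

lemma sum_shiftedRowLen_sub (hμ : μ.rowLen N = 0) (hν : ν.rowLen N = 0) (h : μ ≤ ν) :
    ∑ b : Fin N, ν.shiftedRowLen b - ∑ a : Fin N, μ.shiftedRowLen a =
      ((ν.card - μ.card : ℕ) : ℤ) := by
  rw [sum_shiftedRowLen hμ, sum_shiftedRowLen hν,
    Nat.cast_sub (card_le_card (cells_subset_iff.2 h))]
  ring

open scoped Classical in
lemma sum_filter_maximal_cells_sdiff {M : Type*} [AddCommMonoid M] (hν : ν.rowLen N = 0)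
    (g : ℕ × ℕ → M) :
    ∑ p ∈ ν.cells \ μ.cells with Maximal (· ∈ ν.cells \ μ.cells) p, g p =
      ∑ b : Fin N, if Maximal (· ∈ ν.cells \ μ.cells) ((b : ℕ), ν.rowLen b - 1) then
        g (b, ν.rowLen b - 1) else 0 := by
  rw [← sum_filter]
  symm
  refine sum_bij (fun b _ => ((b : ℕ), ν.rowLen b - 1)) (fun b hb => ?_)
    (fun b₁ _ b₂ _ h => Fin.ext (congrArg Prod.fst h)) (fun p hp => ?_) fun _ _ => rfl
  · exact mem_filter.2 ⟨(mem_filter.1 hb).2.1, (mem_filter.1 hb).2⟩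
  · obtain ⟨i, j⟩ := p
    have hmax := (mem_filter.1 hp).2
    have hrow : j + 1 = ν.rowLen i := (maximal_mem_iff_rowLen.1
      (maximal_mem_cells_sdiff_iff.1 hmax).1).1
    have hiN : i < N := by
      by_contra
      have := ν.rowLen_anti N i (by omega)
      omega
    have hj : ν.rowLen i - 1 = j := by omega
    exact ⟨⟨i, hiN⟩, mem_filter.2 ⟨mem_univ _, by simpa [hj] using hmax⟩, by simp [hj]⟩

end YoungDiagram

lemma isSkewSYT_iff_isStdLabeling {μ ν : YoungDiagram} (h : μ ≤ ν) {f : ℕ × ℕ → ℕ} :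
    IsSkewSYT μ ν f ↔ IsStdLabeling (ν.cells \ μ.cells) f := by
  rw [IsSkewSYT, IsStdLabeling, YoungDiagram.strictMonoOn_cells_sdiff_iff,
    card_sdiff_of_subset (YoungDiagram.cells_subset_iff.2 h)]

lemma dimSkew_eq_ncard_stdLabelings {μ ν : YoungDiagram} (h : μ ≤ ν) :
    dimSkew μ ν = (stdLabelings (ν.cells \ μ.cells)).ncard := by
  simp only [dimSkew, stdLabelings, isSkewSYT_iff_isStdLabeling h]

lemma dimSkew_self (μ : YoungDiagram) : dimSkew μ μ = 1 := by
  rw [dimSkew_eq_ncard_stdLabelings le_rfl, Finset.sdiff_self, stdLabelings_empty,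
    Set.ncard_singleton]

noncomputable def jacobiTrudiMatrix (N : ℕ) (μ ν : YoungDiagram) : Matrix (Fin N) (Fin N) ℝ :=
  invFactorialMatrix (fun a : Fin N => μ.shiftedRowLen a) fun b => ν.shiftedRowLen b

section JacobiTrudi

open YoungDiagram

variable {N : ℕ} {μ ν : YoungDiagram}

lemma det_jacobiTrudiMatrix_self : (jacobiTrudiMatrix N μ μ).det = 1 :=
  det_invFactorialMatrix_self (strictAnti_shiftedRowLen.comp_strictMono Fin.val_strictMono)

lemma det_jacobiTrudiMatrix_of_not_le (hμ : μ.rowLen N = 0) (h : ¬μ ≤ ν) :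
    (jacobiTrudiMatrix N μ ν).det = 0 := by
  obtain ⟨i, hi⟩ : ∃ i, ν.rowLen i < μ.rowLen i := by
    simpa [le_iff_forall_rowLen_le] using h
  have hiN : i < N := by
    by_contra
    have := μ.rowLen_anti N i (by omega)
    omega
  refine det_invFactorialMatrix_eq_zero_of_lt
    (strictAnti_shiftedRowLen.comp_strictMono Fin.val_strictMono).antitone
    (strictAnti_shiftedRowLen.comp_strictMono Fin.val_strictMono).antitone (i := ⟨i, hiN⟩) ?_
  simp only [shiftedRowLen]
  omega

lemma det_invFactorialMatrix_update_shiftedRowLen (hν : ν.rowLen N = 0) (b : Fin N) :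
    (invFactorialMatrix (fun a : Fin N => μ.shiftedRowLen a)
      (update (fun c : Fin N => ν.shiftedRowLen c) b (ν.shiftedRowLen b - 1))).det =
      if h : ν.rowLen (b + 1) < ν.rowLen b then
        (jacobiTrudiMatrix N μ (ν.erase _ (maximal_mem_rowLen_sub_one_iff.2 h))).det
      else 0 := by
  split_ifs with h
  · rw [jacobiTrudiMatrix, shiftedRowLen_erase]
    congr
    exact (update_comp_eq_of_injective ν.shiftedRowLen Fin.val_injective b _).symm
  have hb : ν.rowLen (b + 1) = ν.rowLen b :=
    le_antisymm (ν.rowLen_anti _ _ (Nat.le_succ _)) (by omega)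
  by_cases hbN : (b : ℕ) + 1 < N
  · -- lowering row `b` makes its shifted length equal to that of row `b + 1`
    have hbc : b ≠ ⟨b + 1, hbN⟩ := Fin.ne_of_val_ne (Nat.lt_succ_self _).ne
    refine Matrix.det_zero_of_column_eq hbc fun a => ?_
    simp only [invFactorialMatrix, Matrix.of_apply, update_self, update_of_ne hbc.symm,
      shiftedRowLen, hb]
    push_cast
    ring_nf
  · -- the last row is empty, so lowering it makes the whole column vanish
    have hb0 : ν.rowLen b = 0 := by rw [← hb, show (b : ℕ) + 1 = N by omega, hν]
    refine Matrix.det_eq_zero_of_column_eq_zero b fun a => invFactorial_of_neg ?_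
    simp only [update_self, shiftedRowLen, hb0]
    omega

open scoped Classical in
lemma ite_le_erase_div_factorial_eq {p : ℕ × ℕ} (hle : μ ≤ ν) (hp : Maximal (· ∈ ν) p) :
    (if μ ≤ ν.erase p hp then
      (dimSkew μ (ν.erase p hp) : ℝ) / ((ν.erase p hp).card - μ.card)! else 0) =
      if Maximal (· ∈ ν.cells \ μ.cells) p then
        ((stdLabelings ((ν.cells \ μ.cells).erase p)).ncard : ℝ) / (ν.card - μ.card - 1)!
      else 0 := by
  have hcard := card_erase (hp := hp)
  simp only [maximal_mem_cells_sdiff_iff, le_erase_iff, hle, hp, true_and]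
  by_cases hpμ : p ∈ μ
  · simp only [hpμ, not_true_eq_false, if_false]
  rw [if_pos hpμ, if_pos hpμ, dimSkew_eq_ncard_stdLabelings (le_erase_iff.2 ⟨hle, hpμ⟩),
    cells_erase, erase_sdiff_comm,
    show (ν.erase p hp).card - μ.card = ν.card - μ.card - 1 by omega]

open scoped Classical in
theorem det_jacobiTrudiMatrix (hμ : μ.rowLen N = 0) (hν : ν.rowLen N = 0) :
    (jacobiTrudiMatrix N μ ν).det =
      if μ ≤ ν then (dimSkew μ ν : ℝ) / (ν.card - μ.card)! else 0 := by
  induction hm : ν.card using Nat.strong_induction_on generalizing ν with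
  | _ m ih =>
  subst hm
  split_ifs with hle
  swap
  · exact det_jacobiTrudiMatrix_of_not_le hμ hle
  obtain rfl | hlt := hle.eq_or_lt
  · simp [det_jacobiTrudiMatrix_self, dimSkew_self]
  set s := ν.cells \ μ.cells
  set n := ν.card - μ.card with hn_def
  have hs : s.Nonempty := sdiff_nonempty.2 fun h => hlt.not_ge (cells_subset_iff.1 h)
  have hsn : #s = n := card_sdiff_of_subset (cells_subset_iff.2 hle)
  obtain ⟨k, hk⟩ : ∃ k, n = k + 1 := Nat.exists_eq_add_one_of_ne_zero (hsn ▸ hs.card_pos.ne')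
  have hterm (b : Fin N) :
      (invFactorialMatrix (fun a : Fin N => μ.shiftedRowLen a)
        (update (fun c : Fin N => ν.shiftedRowLen c) b (ν.shiftedRowLen b - 1))).det =
      if Maximal (· ∈ s) ((b : ℕ), ν.rowLen b - 1) then
        ((stdLabelings (s.erase ((b : ℕ), ν.rowLen b - 1))).ncard : ℝ) / k ! else 0 := by
    rw [det_invFactorialMatrix_update_shiftedRowLen hν b]
    by_cases hcorner : ν.rowLen (b + 1) < ν.rowLen b
    · have hp := maximal_mem_rowLen_sub_one_iff.2 hcorner
      have hcard := card_erase (hp := hp)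
      have hrowN := le_iff_forall_rowLen_le.1 (erase_le (hp := hp)) N
      rw [dif_pos hcorner, ih (ν.erase _ hp).card (by omega) (by omega) rfl,
        ite_le_erase_div_factorial_eq hle, ← hn_def, hk, add_tsub_cancel_right]
    · rw [dif_neg hcorner, if_neg fun h =>
        hcorner (maximal_mem_rowLen_sub_one_iff.1 (maximal_mem_cells_sdiff_iff.1 h).1)]
  have hrec := intCast_sum_sub_mul_det_invFactorialMatrix (fun a : Fin N => μ.shiftedRowLen a)
    fun b : Fin N => ν.shiftedRowLen b
  simp only [sum_shiftedRowLen_sub hμ hν hle, Int.cast_natCast, ← hn_def, hk, hterm] at hrec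
  rw [← sum_filter_maximal_cells_sdiff hν fun p => ((stdLabelings (s.erase p)).ncard : ℝ) / k !,
    ← sum_div, ← Nat.cast_sum, ← ncard_stdLabelings_eq_sum hs,
    ← dimSkew_eq_ncard_stdLabelings hle] at hrec
  rw [hk, Nat.factorial_succ, Nat.cast_mul, mul_comm, ← div_div, ← hrec]
  exact (mul_div_cancel_left₀ _ (by positivity)).symm

end JacobiTrudi

/-- Jacobi–Trudi identity at the Plancherel specialization: for Young diagrams
`μ ⊆ λ` with at most `N` rows (rows `1,…,N`, so `λ_b = λ.rowLen (b-1)`), the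
`N × N` determinant of Poisson weights `t^{e(a,b)}/e(a,b)!` with
`e(a,b) = (λ_b − b) − (μ_a − a)` (and entry `0` when `e(a,b) < 0`) equals
`dim(λ/μ) · t^{|λ|−|μ|}/(|λ|−|μ|)!`. -/
theorem jacobi_trudi_plancherel (N : ℕ) (μ lam : YoungDiagram) (hsub : μ ≤ lam)
    (hmurows : μ.rowLen N = 0) (hlamrows : lam.rowLen N = 0) (t : ℝ) :
    Matrix.det (fun a b : Fin N =>
      let e : ℤ := ((lam.rowLen b : ℤ) - ((b : ℕ) + 1)) - ((μ.rowLen a : ℤ) - ((a : ℕ) + 1))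
      if 0 ≤ e then t ^ e.toNat / (Nat.factorial e.toNat : ℝ) else 0) =
    (dimSkew μ lam : ℝ) * t ^ (lam.card - μ.card) /
      (Nat.factorial (lam.card - μ.card) : ℝ) := by
  calc _ = t ^ (lam.card - μ.card) * (jacobiTrudiMatrix N μ lam).det :=
        det_pow_div_factorial_eq t (YoungDiagram.sum_shiftedRowLen_sub hmurows hlamrows hsub)
    _ = _ := by rw [det_jacobiTrudiMatrix hmurows hlamrows, if_pos hsub]; ring
end

section
/- Let p ∈ (0,1), let ι be a finite set, let μ_p be the i.i.d. geometric(p) product measure on ι → ℕ, and let n ∈ ℕ. Then the conditional distribution of μ_p given the event {x : ι → ℕ | ∑_{i∈ι} x(i) = n} is uniform on that finite set: for every x : ι → ℕ with ∑_{i∈ι} x(i) = n, the conditional probability μ_p({x} | {∑ = n}) equals the reciprocal of the binomial coefficient (|ι| + n − 1 choose n). -/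
open MeasureTheory

/-- The geometric distribution with parameter `p`: the measure on `ℕ` with
`P({x}) = (1 − p) · p^x`. -/
noncomputable def geomMeasure (p : ℝ) : Measure ℕ :=
  Measure.count.withDensity (fun x => ENNReal.ofReal ((1 - p) * p ^ x))

/-- The i.i.d. geometric(`p`) product measure on `ι → ℕ` for a finite index set `ι`. -/
noncomputable def geomProdMeasure (p : ℝ) (ι : Type*) [Fintype ι] : Measure (ι → ℕ) :=
  Measure.pi (fun _ : ι => geomMeasure p)

open ProbabilityTheory ENNReal

/-! The weight `(1 - p)^|ι| · p^(∑ i, y i)` of a configuration `y` depends only on its sum, so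
all configurations with sum `n` carry the same positive mass and the conditional law on that
fibre is uniform. By stars and bars (the fibre is in bijection with `Sym ι n`) it has
`(|ι| + n - 1).choose n` elements. -/

open Finset

lemma ProbabilityTheory.cond_singleton_eq_inv_card {Ω : Type*} [MeasurableSpace Ω]
    [MeasurableSingletonClass Ω] {μ : Measure Ω} {s : Finset Ω} {c : ℝ≥0∞}
    (hc₀ : c ≠ 0) (hc : c ≠ ∞) (hμ : ∀ y ∈ s, μ {y} = c) {x : Ω} (hx : x ∈ s) :
    μ[{x} | s] = (#s : ℝ≥0∞)⁻¹ := by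
  have hμs : μ s = #s * c := by
    rw [← sum_measure_singleton, sum_congr rfl hμ, sum_const, nsmul_eq_mul]
  rw [cond_apply s.measurableSet, Set.inter_eq_self_of_subset_right (by simpa using hx), hμs,
    hμ x hx, ENNReal.mul_inv (.inr hc) (.inl (natCast_ne_top _)), mul_assoc,
    ENNReal.inv_mul_cancel hc₀ hc, mul_one]

lemma Finset.card_piAntidiag_univ (ι : Type*) [Fintype ι] [DecidableEq ι] (n : ℕ) :
    #(piAntidiag univ n : Finset (ι → ℕ)) = (Fintype.card ι + n - 1).choose n := by
  rw [← map_sym_eq_piAntidiag, card_map, sym_univ, card_univ, Sym.card_sym_eq_choose]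

lemma geomMeasure_singleton (p : ℝ) (k : ℕ) :
    geomMeasure p {k} = ENNReal.ofReal ((1 - p) * p ^ k) := by
  rw [geomMeasure, withDensity_apply _ (measurableSet_singleton k),
    lintegral_singleton, Measure.count_singleton, mul_one]

instance geomMeasure.sigmaFinite (p : ℝ) : SigmaFinite (geomMeasure p) :=
  SigmaFinite.withDensity_of_ne_top (ae_of_all _ fun _ => ofReal_ne_top)

lemma geomProdMeasure_singleton {p : ℝ} (hp₀ : 0 ≤ p) (hp₁ : p ≤ 1)
    {ι : Type*} [Fintype ι] (y : ι → ℕ) :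
    geomProdMeasure p ι {y} = ENNReal.ofReal ((1 - p) ^ Fintype.card ι * p ^ ∑ i, y i) := by
  rw [geomProdMeasure, Measure.pi_singleton]
  simp_rw [geomMeasure_singleton]
  rw [← ofReal_prod_of_nonneg fun i _ ↦ mul_nonneg (by linarith) (pow_nonneg hp₀ _),
    prod_mul_distrib, prod_const, prod_pow_eq_pow_sum, card_univ]

/-- Conditioned on the sum of the entries being `n`, i.i.d. geometric(`p`) random
variables are uniformly distributed: each configuration with sum `n` has conditional
probability `1 / (|ι| + n − 1 choose n)`. -/
theorem geomProd_cond_sum_uniform (p : ℝ) (hp : p ∈ Set.Ioo (0 : ℝ) 1)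
    (ι : Type*) [Fintype ι] (n : ℕ) (x : ι → ℕ) (hx : ∑ i, x i = n) :
    ProbabilityTheory.cond (geomProdMeasure p ι) {y : ι → ℕ | ∑ i, y i = n} {x} =
      ((Nat.choose (Fintype.card ι + n - 1) n : ℝ≥0∞))⁻¹ := by
  classical
  obtain ⟨hp₀, hp₁⟩ := hp
  have hfibre : {y : ι → ℕ | ∑ i, y i = n} = (piAntidiag univ n : Finset (ι → ℕ)) := by
    ext y; simp [mem_piAntidiag]
  have hweight_pos : 0 < (1 - p) ^ Fintype.card ι * p ^ n := by
    have : 0 < 1 - p := by linarith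
    positivity
  rw [hfibre, ← card_piAntidiag_univ]
  refine cond_singleton_eq_inv_card (ofReal_pos.2 hweight_pos).ne' ofReal_ne_top
    (fun y hy ↦ ?_) (by simpa [mem_piAntidiag] using hx)
  rw [geomProdMeasure_singleton hp₀.le hp₁.le, (mem_piAntidiag.1 hy).1]
end
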